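/- arXiv:1410.5910 — 5 statements merged into one kernel-verified Lean document; each statement's English description precedes it below -/
import Mathlib

section
/- Let H be an n×n complex tridiagonal matrix with diagonal entries b_i, subdiagonal entries a_i, and superdiagonal entries c_i. Define θ_{-1}=0, θ_0=1, θ_i = b_i θ_{i-1} - a_i c_{i-1} θ_{i-2}, and φ_{n+2}=0, φ_{n+1}=1, φ_i = b_i φ_{i+1} - c_i a_{i+1} φ_{i+2}. Then for all 1 ≤ i ≤ n, θ_i φ_{i+1} - a_{i+1} c_i θ_{i-1} φ_{i+2} = θ_n. -/
/-- Usmani's identity for the forward and backward minor recurrences of a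
tridiagonal matrix: `θ_i φ_{i+1} - a_{i+1} c_i θ_{i-1} φ_{i+2} = θ_n`. -/
theorem tridiagonal_minor_identity (n : ℤ) (hn : 1 ≤ n) (a b c θ φ : ℤ → ℂ)
    (hθm : θ (-1) = 0) (hθ0 : θ 0 = 1)
    (hθ : ∀ i : ℤ, 1 ≤ i → i ≤ n → θ i = b i * θ (i - 1) - a i * c (i - 1) * θ (i - 2))
    (hφn2 : φ (n + 2) = 0) (hφn1 : φ (n + 1) = 1)
    (hφ : ∀ i : ℤ, 1 ≤ i → i ≤ n → φ i = b i * φ (i + 1) - c i * a (i + 1) * φ (i + 2)) :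
    ∀ i : ℤ, 1 ≤ i → i ≤ n →
      θ i * φ (i + 1) - a (i + 1) * c i * θ (i - 1) * φ (i + 2) = θ n := by
  intro i h1 h2
  obtain ⟨k, hk⟩ : ∃ k : ℕ, n - i = k := ⟨(n - i).toNat, (Int.toNat_of_nonneg (by omega)).symm⟩
  induction k generalizing i with
  | zero =>
    have hi : i = n := by omega
    subst hi
    simp [hφn1, hφn2]
  | succ k ih =>
    have hi1 : (1 : ℤ) ≤ i + 1 := by omega
    have hin : i + 1 ≤ n := by omega
    have key := ih (i + 1) hi1 hin (by push_cast; omega)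
    rw [← key]
    have hθ1 : θ (i + 1) = b (i + 1) * θ i - a (i + 1) * c i * θ (i - 1) := by
      have h := hθ (i + 1) hi1 hin
      have e1 : i + 1 - 1 = i := by ring
      have e2 : i + 1 - 2 = i - 1 := by ring
      rw [e1, e2] at h
      exact h
    have hφ1 : φ (i + 1) = b (i + 1) * φ (i + 2) - c (i + 1) * a (i + 2) * φ (i + 3) := by
      have h := hφ (i + 1) hi1 hin
      have e1 : i + 1 + 1 = i + 2 := by ring
      have e2 : i + 1 + 2 = i + 3 := by ring
      rw [e1, e2] at h
      exact h
    have e3 : i + 1 - 1 = i := by ring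
    rw [hθ1, hφ1, e3]
    ring
end

section
/- Let A be an invertible matrix partitioned into blocks, with A_{11} a square diagonal block whose complementary block in A^{-1} (i.e. the block (A^{-1})_{22} corresponding to the complementary index set) is of full rank. Then A_{11} is invertible. More precisely (nullity theorem): the nullity of a square submatrix of A equals the nullity of the complementary submatrix of A^{-1}. -/
/-- The submatrix of `A` with rows in `S` and columns in `T` (in increasing order). -/
def subm {N : ℕ} (A : Matrix (Fin N) (Fin N) ℂ) (S T : Finset (Fin N)) :
    Matrix (Fin S.card) (Fin T.card) ℂ :=
  Matrix.of fun i j => A ((S.orderIsoOfFin rfl i : {x // x ∈ S}) : Fin N)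
    ((T.orderIsoOfFin rfl j : {x // x ∈ T}) : Fin N)

namespace NullityAux

variable {N : ℕ}

/-- The increasing enumeration of `S`. -/
def emb (S : Finset (Fin N)) (i : Fin S.card) : Fin N :=
  ((S.orderIsoOfFin rfl i : {x // x ∈ S}) : Fin N)

lemma emb_mem (S : Finset (Fin N)) (i : Fin S.card) : emb S i ∈ S :=
  (S.orderIsoOfFin rfl i).2

lemma emb_surj (S : Finset (Fin N)) {j : Fin N} (hj : j ∈ S) : ∃ i, emb S i = j :=
  ⟨(S.orderIsoOfFin rfl).symm ⟨j, hj⟩, by simp [emb]⟩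

/-- Extension by zero of a vector indexed by `T`. -/
def ext (T : Finset (Fin N)) (x : Fin T.card → ℂ) : Fin N → ℂ :=
  fun j => if h : j ∈ T then x ((T.orderIsoOfFin rfl).symm ⟨j, h⟩) else 0

/-- Restriction of a vector to `S`. -/
def res (S : Finset (Fin N)) (y : Fin N → ℂ) : Fin S.card → ℂ :=
  fun i => y (emb S i)

lemma ext_emb (T : Finset (Fin N)) (x : Fin T.card → ℂ) (j : Fin T.card) :
    ext T x (emb T j) = x j := by
  have h := emb_mem T j
  simp only [ext, dif_pos h]
  congr 1
  have : (⟨emb T j, h⟩ : {x // x ∈ T}) = T.orderIsoOfFin rfl j := rfl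
  rw [this, OrderIso.symm_apply_apply]

lemma ext_notMem (T : Finset (Fin N)) (x : Fin T.card → ℂ) {j : Fin N} (hj : j ∉ T) :
    ext T x j = 0 := dif_neg hj

lemma res_ext (T : Finset (Fin N)) (x : Fin T.card → ℂ) : res T (ext T x) = x :=
  funext (ext_emb T x)

lemma ext_res (T : Finset (Fin N)) (y : Fin N → ℂ) (h0 : ∀ j ∉ T, y j = 0) :
    ext T (res T y) = y := by
  funext j
  by_cases hj : j ∈ T
  · simp only [ext, dif_pos hj, res]
    congr 1
    exact congrArg Subtype.val ((T.orderIsoOfFin rfl).apply_symm_apply ⟨j, hj⟩)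
  · rw [ext_notMem T _ hj, h0 j hj]

lemma res_eq_zero_iff (S : Finset (Fin N)) (y : Fin N → ℂ) :
    res S y = 0 ↔ ∀ j ∈ S, y j = 0 := by
  constructor
  · intro h j hj
    obtain ⟨i, rfl⟩ := emb_surj S hj
    exact congrFun h i
  · intro h
    funext i
    exact h _ (emb_mem S i)

/-- `ext` as a linear map. -/
def extLin (T : Finset (Fin N)) : (Fin T.card → ℂ) →ₗ[ℂ] (Fin N → ℂ) where
  toFun := ext T
  map_add' x y := by
    funext j
    by_cases h : j ∈ T <;> simp [ext, h]
  map_smul' c x := by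
    funext j
    by_cases h : j ∈ T <;> simp [ext, h]

lemma subm_mulVec (A : Matrix (Fin N) (Fin N) ℂ) (S T : Finset (Fin N))
    (x : Fin T.card → ℂ) :
    (subm A S T).mulVec x = res S (A.mulVec (ext T x)) := by
  funext i
  simp only [Matrix.mulVec, dotProduct, res, subm, Matrix.of_apply]
  calc ∑ j, A (emb S i) (emb T j) * x j
      = ∑ j, A (emb S i) (emb T j) * ext T x (emb T j) := by
        simp [ext_emb]
    _ = ∑ a : {x // x ∈ T}, A (emb S i) a * ext T x a :=
        Fintype.sum_equiv (T.orderIsoOfFin rfl).toEquiv _ _ (fun j => rfl)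
    _ = ∑ a ∈ T, A (emb S i) a * ext T x a := by
        rw [← Finset.sum_attach T (fun a => A (emb S i) a * ext T x a),
          Finset.univ_eq_attach]
    _ = ∑ a, A (emb S i) a * ext T x a :=
        Finset.sum_subset T.subset_univ (fun a _ ha => by
          rw [ext_notMem T x ha, mul_zero])

/-- The key inequality: nullity of `A[S,T]` is at most nullity of `A⁻¹[Tᶜ,Sᶜ]`. -/
lemma key (A : Matrix (Fin N) (Fin N) ℂ) (hA : IsUnit A.det) (S T : Finset (Fin N)) :
    Module.finrank ℂ (LinearMap.ker (subm A S T).mulVecLin)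
      ≤ Module.finrank ℂ (LinearMap.ker (subm A⁻¹ Tᶜ Sᶜ).mulVecLin) := by
  have hAinv : ∀ v : Fin N → ℂ, A⁻¹.mulVec (A.mulVec v) = v := by
    intro v
    rw [Matrix.mulVec_mulVec, Matrix.nonsing_inv_mul A hA, Matrix.one_mulVec]
  -- the linear map x ↦ (A · (ext x)) restricted to Sᶜ
  set ψ : (Fin T.card → ℂ) →ₗ[ℂ] (Fin Sᶜ.card → ℂ) :=
    (LinearMap.funLeft ℂ ℂ (emb Sᶜ)).comp (A.mulVecLin.comp (extLin T)) with hψ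
  have hψ_apply : ∀ x, ψ x = res Sᶜ (A.mulVec (ext T x)) := fun x => rfl
  have hmap : ∀ x ∈ LinearMap.ker (subm A S T).mulVecLin,
      ψ x ∈ LinearMap.ker (subm A⁻¹ Tᶜ Sᶜ).mulVecLin := by
    intro x hx
    rw [LinearMap.mem_ker, Matrix.mulVecLin_apply] at hx ⊢
    set y := A.mulVec (ext T x) with hy
    have hyS : ∀ j ∈ S, y j = 0 := by
      rw [← res_eq_zero_iff, ← subm_mulVec]
      exact hx
    have hy2 : ext Sᶜ (res Sᶜ y) = y := by
      refine ext_res Sᶜ y (fun j hj => hyS j ?_)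
      simpa using hj
    rw [hψ_apply, subm_mulVec, ← hy, hy2, hAinv]
    funext i
    exact ext_notMem T x (by simpa using emb_mem Tᶜ i)
  have hinj : Function.Injective (ψ.restrict hmap) := by
    rw [← LinearMap.ker_eq_bot, eq_bot_iff]
    rintro ⟨x, hx⟩ hx0
    rw [LinearMap.mem_ker] at hx0
    have h0 : ψ x = 0 := congrArg Subtype.val hx0
    rw [LinearMap.mem_ker, Matrix.mulVecLin_apply] at hx
    set y := A.mulVec (ext T x) with hy
    have hyS : ∀ j ∈ S, y j = 0 := by
      rw [← res_eq_zero_iff, ← subm_mulVec]; exact hx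
    have hySc : ∀ j ∈ Sᶜ, y j = 0 := by
      rw [← res_eq_zero_iff]; exact h0
    have hy0 : y = 0 := by
      funext j
      by_cases hj : j ∈ S
      · exact hyS j hj
      · exact hySc j (by simpa using hj)
    have hext : ext T x = 0 := by
      have := hAinv (ext T x)
      rw [← hy, hy0, Matrix.mulVec_zero] at this
      exact this.symm
    have : x = 0 := by rw [← res_ext T x, hext]; rfl
    simpa [Submodule.mk_eq_zero] using this
  exact LinearMap.finrank_le_finrank_of_injective hinj

end NullityAux

open NullityAux in
/-- The nullity theorem (Strang–Nguyen): for an invertible matrix `A` and index sets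
`S`, `T` with `|S| = |T|`, the nullity of the submatrix `A[S,T]` equals the nullity of
the complementary submatrix `A⁻¹[Tᶜ,Sᶜ]`.  In particular, if `S = T` and the
complementary block of `A⁻¹` has full rank (trivial kernel), then the diagonal block
`A[S,S]` is invertible. -/
theorem nullity_theorem (N : ℕ) (A : Matrix (Fin N) (Fin N) ℂ) (hA : IsUnit A.det)
    (S T : Finset (Fin N)) (hST : S.card = T.card) :
    Module.finrank ℂ (LinearMap.ker (subm A S T).mulVecLin)
        = Module.finrank ℂ (LinearMap.ker (subm A⁻¹ Tᶜ Sᶜ).mulVecLin) ∧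
      (S = T → LinearMap.ker (subm A⁻¹ Sᶜ Sᶜ).mulVecLin = ⊥ → IsUnit (subm A S S)) := by
  have heq : ∀ (S' T' : Finset (Fin N)),
      Module.finrank ℂ (LinearMap.ker (subm A S' T').mulVecLin)
        = Module.finrank ℂ (LinearMap.ker (subm A⁻¹ T'ᶜ S'ᶜ).mulVecLin) := by
    intro S' T'
    refine le_antisymm (key A hA S' T') ?_
    have h2 := key A⁻¹ (Matrix.isUnit_nonsing_inv_det A hA) T'ᶜ S'ᶜ
    rwa [compl_compl, compl_compl, Matrix.nonsing_inv_nonsing_inv A hA] at h2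
  refine ⟨heq S T, ?_⟩
  rintro rfl hker
  have h0 : Module.finrank ℂ (LinearMap.ker (subm A S S).mulVecLin) = 0 := by
    rw [heq S S, hker, finrank_bot]
  have hbot : LinearMap.ker (subm A S S).mulVecLin = ⊥ :=
    Submodule.finrank_eq_zero.mp h0
  rw [← Matrix.mulVec_injective_iff_isUnit]
  intro u v huv
  have : (subm A S S).mulVecLin (u - v) = 0 := by
    simp [Matrix.mulVecLin_apply, Matrix.mulVec_sub, huv]
  have := hbot ▸ (LinearMap.mem_ker.mpr this)
  have := Submodule.mem_bot ℂ |>.mp this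
  exact sub_eq_zero.mp this
end

section
/- In the 1D discrete Helmholtz setting (as above), if k < 1 or k > n then the incomplete Green's formula annihilates: 0 = G^{↑}_k(u_n, u_{n+1}) + G^{↓}_k(u_0, u_1) + N_k f, where u is the restriction of the global discrete solution and G^k is any local Green's function satisfying (HG^k)_i = δ_i^k/h for 0 ≤ i ≤ n+1. -/
lemma telescope_Icc (W : ℤ → ℂ) (n : ℕ) :
    ∑ j ∈ Finset.Icc (1 : ℤ) (n : ℤ), (W j - W (j - 1)) = W n - W 0 := by
  induction n with
  | zero => simp
  | succ m ih =>
    push_cast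
    rw [show Finset.Icc (1:ℤ) ((m:ℤ)+1) = insert ((m:ℤ)+1) (Finset.Icc (1:ℤ) (m:ℤ)) by
        ext x; simp only [Finset.mem_Icc, Finset.mem_insert]; omega,
      Finset.sum_insert (by simp), ih]
    ring

/-- Discrete annihilation formula: in the 1D discrete Helmholtz setting, if the
evaluation index `k` lies outside `Ω = {1,...,n}` (i.e. `k < 1` or `k > n`), then
the incomplete Green's formula annihilates:
`0 = G↑_k(u_n,u_{n+1}) + G↓_k(u_0,u_1) + N_k f`, where `G^k` is any local Green's
function satisfying `(HG^k)_i = δ_i^k/h` for `0 ≤ i ≤ n+1`. -/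
theorem discrete_annihilation_formula (n : ℕ) (h : ℝ) (hh : 0 < h)
    (ω : ℂ) (msq f u : ℤ → ℂ) (G : ℤ → ℤ → ℂ)
    (hu : ∀ i : ℤ,
      (-(u (i - 1)) + 2 * u i - u (i + 1)) / (h : ℂ) ^ 2 - msq i * ω ^ 2 * u i = f i)
    (hsupp : ∀ i : ℤ, (i < 1 ∨ (n : ℤ) < i) → f i = 0)
    (k : ℤ) (hk : k < 1 ∨ (n : ℤ) < k)
    (hG : ∀ i : ℤ, 0 ≤ i → i ≤ (n : ℤ) + 1 →
      (-(G k (i - 1)) + 2 * G k i - G k (i + 1)) / (h : ℂ) ^ 2 - msq i * ω ^ 2 * G k i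
        = if i = k then 1 / (h : ℂ) else 0) :
    0 = (1 / (h : ℂ)) * (G k ((n : ℤ) + 1) * (u ((n : ℤ) + 1) - u (n : ℤ))
          - u ((n : ℤ) + 1) * (G k ((n : ℤ) + 1) - G k (n : ℤ)))
        + (1 / (h : ℂ)) * (-(G k 0) * (u 1 - u 0) + u 0 * (G k 1 - G k 0))
        + (h : ℂ) * ∑ j ∈ Finset.Icc (1 : ℤ) (n : ℤ), G k j * f j := by
  have hC : (h : ℂ) ≠ 0 := by
    exact_mod_cast hh.ne'
  set W : ℤ → ℂ := fun j => u j * G k (j + 1) - G k j * u (j + 1) with hW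
  have hsum : ∑ j ∈ Finset.Icc (1 : ℤ) (n : ℤ), G k j * f j
      = (W n - W 0) / (h : ℂ) ^ 2 := by
    rw [← telescope_Icc W n, Finset.sum_div]
    refine Finset.sum_congr rfl fun j hj => ?_
    rw [Finset.mem_Icc] at hj
    have e1 := hu j
    have e2 := hG j (by omega) (by omega)
    rw [if_neg (by omega)] at e2
    simp only [hW]
    have : (j - 1) + 1 = j := by ring
    rw [this]
    linear_combination (-(G k j)) * e1 + (u j) * e2
  rw [hsum]
  simp only [hW]
  field_simp
  ring
end

section
/- Let G be the inverse of an invertible block-tridiagonal matrix with blocks as in the 2D discrete Helmholtz setting, and suppose the diagonal blocks G(z_j,z_j) of the inverse are invertible. If a pair of interface traces (u_0, u_1) satisfies the annihilation relation G(z_1,z_1)u_0 = G(z_1,z_0)u_1 at the top of a layer, then the annihilation relation propagates to all depths inside the layer: G(z_j,z_1)u_0 = G(z_j,z_0)u_1 for all j ≥ 1. -/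
/-- The `(j,k)` block of size `m` of a matrix indexed by `Fin nz × Fin m`. -/
def blk {nz m : ℕ} (A : Matrix (Fin nz × Fin m) (Fin nz × Fin m) ℂ) (j k : Fin nz) :
    Matrix (Fin m) (Fin m) ℂ :=
  Matrix.of fun p q => A (j, p) (k, q)

lemma mulVec_blk_sum {nz m : ℕ} (A : Matrix (Fin nz × Fin m) (Fin nz × Fin m) ℂ)
    (y : Fin nz → Fin m → ℂ) (j : Fin nz) (p : Fin m) :
    A.mulVec (fun kq => y kq.1 kq.2) (j, p) = ∑ k, (blk A j k).mulVec (y k) p := by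
  simp [Matrix.mulVec, dotProduct, Fintype.sum_prod_type, blk]

lemma mulVec_indicator {nz m : ℕ} (A : Matrix (Fin nz × Fin m) (Fin nz × Fin m) ℂ)
    (l : Fin nz) (u : Fin m → ℂ) (j : Fin nz) (p : Fin m) :
    A.mulVec (fun kq => if kq.1 = l then u kq.2 else 0) (j, p) = (blk A j l).mulVec u p := by
  have := mulVec_blk_sum A (fun k q => if k = l then u q else 0) j p
  rw [this]
  rw [Finset.sum_eq_single l]
  · simp
  · intro k _ hk
    simp [hk, Matrix.mulVec]
  · simp

/-- Annihilation relations propagate into the layer: for the inverse `G = H⁻¹` of an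
invertible block-tridiagonal matrix (symmetric diagonal blocks, off-diagonal blocks
nonzero scalar multiples of the identity, invertible diagonal blocks of the inverse),
if interface traces `(u_0,u_1)` satisfy `G(z_1,z_1)u_0 = G(z_1,z_0)u_1`, then
`G(z_j,z_1)u_0 = G(z_j,z_0)u_1` for all `j ≥ 1`. -/
theorem annihilation_propagates (nz m : ℕ) (hnz : 2 ≤ nz)
    (H : Matrix (Fin nz × Fin m) (Fin nz × Fin m) ℂ)
    (c : ℕ → ℂ)
    (hc : ∀ p : ℕ, 1 ≤ p → p ≤ nz - 1 → c p ≠ 0)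
    (hsymm : ∀ j : Fin nz, (blk H j j).IsSymm)
    (hcoup : ∀ j k : Fin nz, (j : ℕ) + 1 = (k : ℕ) →
      blk H j k = c ((j : ℕ) + 1) • (1 : Matrix (Fin m) (Fin m) ℂ) ∧
      blk H k j = c ((j : ℕ) + 1) • (1 : Matrix (Fin m) (Fin m) ℂ))
    (hfar : ∀ j k : Fin nz, 2 ≤ ((j : ℤ) - (k : ℤ)).natAbs → blk H j k = 0)
    (hdet : IsUnit H.det)
    (hGdiag : ∀ j : Fin nz, IsUnit (blk H⁻¹ j j).det)
    (i0 i1 : Fin nz) (h0 : (i0 : ℕ) = 0) (h1 : (i1 : ℕ) = 1)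
    (u0 u1 : Fin m → ℂ)
    (hann : (blk H⁻¹ i1 i1).mulVec u0 = (blk H⁻¹ i1 i0).mulVec u1) :
    ∀ j : Fin nz, 1 ≤ (j : ℕ) →
      (blk H⁻¹ j i1).mulVec u0 = (blk H⁻¹ j i0).mulVec u1 := by
  classical
  intro j hj
  have hHG : H * H⁻¹ = 1 := Matrix.mul_nonsing_inv H hdet
  have hGH : H⁻¹ * H = 1 := Matrix.nonsing_inv_mul H hdet
  set G := H⁻¹ with hGdef
  set V : Fin nz → Fin m → ℂ :=
    fun k => (blk G k i1).mulVec u0 - (blk G k i0).mulVec u1 with hVdef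
  have hV1 : V i1 = 0 := sub_eq_zero.mpr hann
  rcases eq_or_lt_of_le hj with h | h
  · have hji : j = i1 := Fin.ext (by omega)
    rw [hji]; exact hann
  · have h2j : 2 ≤ (j : ℕ) := h
    have hnz3 : 3 ≤ nz := by have := j.isLt; omega
    set w : Fin nz × Fin m → ℂ := fun kq =>
      (if kq.1 = i1 then u0 kq.2 else 0) - (if kq.1 = i0 then u1 kq.2 else 0) with hwdef
    have hGw : ∀ jr p, G.mulVec w (jr, p) = V jr p := by
      intro jr p
      have hsplit : G.mulVec w (jr, p)
          = G.mulVec (fun kq => if kq.1 = i1 then u0 kq.2 else 0) (jr, p)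
            - G.mulVec (fun kq => if kq.1 = i0 then u1 kq.2 else 0) (jr, p) := by
        simp [hwdef, Matrix.mulVec, dotProduct, mul_sub, Finset.sum_sub_distrib]
      rw [hsplit, mulVec_indicator, mulVec_indicator]
      simp [hVdef]
    have hrow : ∀ (jr : Fin nz) (p : Fin m),
        ∑ k, (blk H jr k).mulVec (V k) p = w (jr, p) := by
      intro jr p
      have h1' : H.mulVec (G.mulVec w) = w := by
        rw [Matrix.mulVec_mulVec, hHG, Matrix.one_mulVec]
      have h2' : G.mulVec w = fun jp => V jp.1 jp.2 := by
        funext jp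
        obtain ⟨a, b⟩ := jp
        exact hGw a b
      rw [← h1', h2', mulVec_blk_sum]
    set y : Fin nz → Fin m → ℂ := fun k => if 2 ≤ (k : ℕ) then V k else 0 with hydef
    set j2 : Fin nz := ⟨2, by omega⟩ with hj2def
    have hj2val : (j2 : ℕ) = 2 := rfl
    have hc2 : blk H i1 j2 = c 2 • 1 := by
      have hcp := (hcoup i1 j2 (by simp [h1, hj2def])).1
      rwa [h1] at hcp
    have hHY : ∀ jr p, H.mulVec (fun kq => y kq.1 kq.2) (jr, p)
        = if jr = i1 then (c 2 • V j2) p else 0 := by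
      intro jr p
      rw [mulVec_blk_sum]
      rcases lt_or_ge ((jr : ℕ)) 2 with hlt | hge
      · rcases (by omega : (jr : ℕ) = 0 ∨ (jr : ℕ) = 1) with h0' | h1'
        · -- jr = i0
          have hji0 : jr ≠ i1 := by intro hh; rw [hh] at h0'; omega
          rw [if_neg hji0]
          apply Finset.sum_eq_zero
          intro k _
          rcases lt_or_ge ((k : ℕ)) 2 with hk | hk
          · have : y k = 0 := by simp [hydef, Nat.not_le.mpr hk]
            simp [this]
          · have : blk H jr k = 0 := hfar jr k (by omega)
            simp [this]
        · -- jr = i1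
          have hji1 : jr = i1 := Fin.ext (by omega)
          rw [if_pos hji1]
          rw [Finset.sum_eq_single j2]
          · have hy2 : y j2 = V j2 := by simp [hydef, hj2def]
            rw [hji1, hc2, hy2, Matrix.smul_mulVec, Matrix.one_mulVec]
          · intro k _ hk
            rcases lt_or_ge ((k : ℕ)) 2 with hk2 | hk2
            · have : y k = 0 := by simp [hydef, Nat.not_le.mpr hk2]
              simp [this]
            · have hk3 : 3 ≤ (k : ℕ) := by
                rcases Nat.lt_or_ge ((k : ℕ)) 3 with hh | hh
                · exfalso; exact hk (Fin.ext (by rw [hj2val]; omega))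
                · exact hh
              have : blk H jr k = 0 := hfar jr k (by omega)
              simp [this]
          · intro hcon
            exact absurd (Finset.mem_univ j2) hcon
      · -- 2 ≤ jr
        have hji0 : jr ≠ i0 := by intro hh; rw [hh] at hge; omega
        have hji1 : jr ≠ i1 := by intro hh; rw [hh] at hge; omega
        rw [if_neg hji1]
        have hterm : ∀ k : Fin nz,
            (blk H jr k).mulVec (y k) p = (blk H jr k).mulVec (V k) p := by
          intro k
          rcases lt_or_ge ((k : ℕ)) 2 with hk | hk
          · rcases (by omega : (k : ℕ) = 0 ∨ (k : ℕ) = 1) with hk0 | hk1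
            · have : blk H jr k = 0 := hfar jr k (by omega)
              simp [this]
            · have hki : k = i1 := Fin.ext (by omega)
              have hy : y k = 0 := by simp [hydef, hk1]
              rw [hy, hki, hV1]
          · have : y k = V k := by simp [hydef, hk]
            rw [this]
        calc ∑ k, (blk H jr k).mulVec (y k) p
            = ∑ k, (blk H jr k).mulVec (V k) p := Finset.sum_congr rfl (fun k _ => hterm k)
          _ = w (jr, p) := hrow jr p
          _ = 0 := by simp [hwdef, hji0, hji1]
    have hYG : (fun kq : Fin nz × Fin m => y kq.1 kq.2)
        = G.mulVec (fun jp => if jp.1 = i1 then (c 2 • V j2) jp.2 else 0) := by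
      have hH : H.mulVec (fun kq => y kq.1 kq.2)
          = fun jp => if jp.1 = i1 then (c 2 • V j2) jp.2 else 0 := by
        funext jp
        obtain ⟨a, b⟩ := jp
        exact hHY a b
      rw [← hH, Matrix.mulVec_mulVec, hGH, Matrix.one_mulVec]
    have hkey : (blk G i1 i1).mulVec (c 2 • V j2) = 0 := by
      funext p
      have h1'' := congrFun hYG (i1, p)
      rw [mulVec_indicator] at h1''
      have hy : y i1 = 0 := by simp [hydef, h1]
      rw [hy] at h1''
      simpa using h1''.symm
    have hVj2 : V j2 = 0 := by
      have hB := hGdiag i1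
      have hinv : (blk G i1 i1)⁻¹.mulVec ((blk G i1 i1).mulVec (c 2 • V j2))
          = c 2 • V j2 := by
        rw [Matrix.mulVec_mulVec, Matrix.nonsing_inv_mul _ hB, Matrix.one_mulVec]
      rw [hkey, Matrix.mulVec_zero] at hinv
      have hc2' : c 2 ≠ 0 := hc 2 (by omega) (by omega)
      exact (smul_eq_zero.mp hinv.symm).resolve_left hc2'
    have hY0 : (fun kq : Fin nz × Fin m => y kq.1 kq.2) = 0 := by
      rw [hYG]
      have : (fun jp : Fin nz × Fin m => if jp.1 = i1 then (c 2 • V j2) jp.2 else 0)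
          = 0 := by
        funext jp
        rw [hVj2]
        simp
      rw [this, Matrix.mulVec_zero]
    have hVj : V j = 0 := by
      funext p
      have hh := congrFun hY0 (j, p)
      simpa [hydef, h2j] using hh
    exact sub_eq_zero.mp hVj
end

section
/- Consider the 1D discrete Helmholtz equation on ℤ partitioned into two subdomains Ω¹ = {1,...,n¹} and Ω² = {n¹+1,...,n²}, with local Green's functions G^{1}, G^{2} satisfying the local equations on extensions of each subdomain. If the interface trace values u_{n¹}, u_{n¹+1} obtained from solving the discrete integral (trace) system coincide with the restriction of the global solution, then the functions reconstructed in each subdomain by the local Green's representation formula, when concatenated, satisfy the global finite difference equation at every point, including the interface rows i = n¹ and i = n¹+1. -/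
private lemma Int.Icc_insert_succ_right {a b : ℤ} (h : a ≤ b + 1) :
    insert (b + 1) (Finset.Icc a b) = Finset.Icc a (b + 1) := by
  ext x
  simp only [Finset.mem_insert, Finset.mem_Icc]
  omega

private lemma tele (g : ℤ → ℂ) (a : ℤ) :
    ∀ b : ℤ, a ≤ b → ∑ j ∈ Finset.Icc a b, (g j - g (j - 1)) = g b - g (a - 1) := by
  refine Int.le_induction ?_ ?_
  · simp
  · intro n hn ih
    rw [← Int.Icc_insert_succ_right (by linarith), Finset.sum_insert (by simp), ih]
    rw [show n + 1 - 1 = n by ring]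
    ring

/-- Discrete Green's representation formula reproduces the solution. -/
private lemma repr_eq (a b : ℤ) (h : ℝ) (hh : 0 < h) (ω : ℂ) (msq f u : ℤ → ℂ)
    (hu : ∀ i : ℤ,
      (-(u (i - 1)) + 2 * u i - u (i + 1)) / (h : ℂ) ^ 2 - msq i * ω ^ 2 * u i = f i)
    (G : ℤ → ℤ → ℂ)
    (hG : ∀ k i : ℤ, a - 1 ≤ i → i ≤ b + 1 →
      (-(G k (i - 1)) + 2 * G k i - G k (i + 1)) / (h : ℂ) ^ 2
          - msq i * ω ^ 2 * G k i = if i = k then 1 / (h : ℂ) else 0)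
    (k : ℤ) (hk1 : a ≤ k) (hk2 : k ≤ b) :
    (1 / (h : ℂ)) * (-(G k (a - 1)) * (u a - u (a - 1))
        + u (a - 1) * (G k a - G k (a - 1)))
      + (1 / (h : ℂ)) * (G k (b + 1) * (u (b + 1) - u b)
          - u (b + 1) * (G k (b + 1) - G k b))
      + (h : ℂ) * ∑ j ∈ Finset.Icc a b, G k j * f j = u k := by
  have hne : (h : ℂ) ≠ 0 := by
    exact_mod_cast Complex.ofReal_ne_zero.mpr (ne_of_gt hh)
  set bf : ℤ → ℂ := fun j => u j * G k (j + 1) - u (j + 1) * G k j with hbf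
  have key : ∀ j ∈ Finset.Icc a b, G k j * f j =
      u j * (if j = k then 1 / (h : ℂ) else 0)
        + (1 / (h : ℂ) ^ 2) * (bf j - bf (j - 1)) := by
    intro j hj
    rw [Finset.mem_Icc] at hj
    rw [← hu j, ← hG k j (by omega) (by omega)]
    simp only [hbf]
    rw [show j - 1 + 1 = j by ring]
    field_simp
    ring
  rw [Finset.sum_congr rfl key, Finset.sum_add_distrib, ← Finset.mul_sum,
    tele bf a b (le_trans hk1 hk2)]
  have hsum : (∑ x ∈ Finset.Icc a b, u x * (if x = k then 1 / (h : ℂ) else 0))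
      = u k * (1 / (h : ℂ)) := by
    rw [Finset.sum_eq_single_of_mem k (Finset.mem_Icc.mpr ⟨hk1, hk2⟩)]
    · simp
    · intro c _ hc; simp [hc]
  rw [hsum]
  simp only [hbf]
  field_simp
  ring

/-- Equivalence of the discrete integral formulation and the volume problem (1D,
two subdomains `Ω¹ = {1,...,n¹}`, `Ω² = {n¹+1,...,n²}`): if the interface traces
used in the local discrete Green's representation formulas coincide with the
restriction of the global solution `u`, then the concatenation `w` of the locally
reconstructed solutions `v₁`, `v₂` satisfies the global finite difference Helmholtz
equation at every point `1 ≤ i ≤ n²`, including the interface rows `i = n¹, n¹+1`. -/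
theorem concatenated_reconstruction_solves (n1 n2 : ℤ) (hn1 : 1 ≤ n1) (h12 : n1 < n2)
    (h : ℝ) (hh : 0 < h) (ω : ℂ) (msq f u : ℤ → ℂ)
    (G1 G2 : ℤ → ℤ → ℂ)
    (hu : ∀ i : ℤ,
      (-(u (i - 1)) + 2 * u i - u (i + 1)) / (h : ℂ) ^ 2 - msq i * ω ^ 2 * u i = f i)
    (hG1 : ∀ k i : ℤ, 0 ≤ i → i ≤ n1 + 1 →
      (-(G1 k (i - 1)) + 2 * G1 k i - G1 k (i + 1)) / (h : ℂ) ^ 2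
          - msq i * ω ^ 2 * G1 k i = if i = k then 1 / (h : ℂ) else 0)
    (hG2 : ∀ k i : ℤ, n1 ≤ i → i ≤ n2 + 1 →
      (-(G2 k (i - 1)) + 2 * G2 k i - G2 k (i + 1)) / (h : ℂ) ^ 2
          - msq i * ω ^ 2 * G2 k i = if i = k then 1 / (h : ℂ) else 0)
    (v1 v2 w : ℤ → ℂ)
    (hv1 : ∀ k : ℤ, v1 k =
      (1 / (h : ℂ)) * (-(G1 k 0) * (u 1 - u 0) + u 0 * (G1 k 1 - G1 k 0))
      + (1 / (h : ℂ)) * (G1 k (n1 + 1) * (u (n1 + 1) - u n1)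
          - u (n1 + 1) * (G1 k (n1 + 1) - G1 k n1))
      + (h : ℂ) * ∑ j ∈ Finset.Icc (1 : ℤ) n1, G1 k j * f j)
    (hv2 : ∀ k : ℤ, v2 k =
      (1 / (h : ℂ)) * (-(G2 k n1) * (u (n1 + 1) - u n1)
          + u n1 * (G2 k (n1 + 1) - G2 k n1))
      + (1 / (h : ℂ)) * (G2 k (n2 + 1) * (u (n2 + 1) - u n2)
          - u (n2 + 1) * (G2 k (n2 + 1) - G2 k n2))
      + (h : ℂ) * ∑ j ∈ Finset.Icc (n1 + 1) n2, G2 k j * f j)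
    (hw : ∀ i : ℤ, w i = if i < 1 ∨ n2 < i then u i else if i ≤ n1 then v1 i else v2 i) :
    ∀ i : ℤ, 1 ≤ i → i ≤ n2 →
      (-(w (i - 1)) + 2 * w i - w (i + 1)) / (h : ℂ) ^ 2 - msq i * ω ^ 2 * w i
        = f i := by
  have hv1u : ∀ k : ℤ, 1 ≤ k → k ≤ n1 → v1 k = u k := by
    intro k hk1 hk2
    rw [hv1 k]
    have := repr_eq 1 n1 h hh ω msq f u hu G1
      (fun k i hi1 hi2 => hG1 k i (by omega) (by omega)) k hk1 hk2
    simpa using this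
  have hv2u : ∀ k : ℤ, n1 + 1 ≤ k → k ≤ n2 → v2 k = u k := by
    intro k hk1 hk2
    rw [hv2 k]
    have := repr_eq (n1 + 1) n2 h hh ω msq f u hu G2
      (fun k i hi1 hi2 => hG2 k i (by omega) (by omega)) k hk1 hk2
    simpa using this
  have hwu : ∀ i : ℤ, w i = u i := by
    intro i
    rw [hw i]
    split_ifs with h1 h2
    · rfl
    · exact hv1u i (by omega) h2
    · exact hv2u i (by omega) (by omega)
  intro i _ _
  simp only [hwu]
  exact hu i
end
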